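/- arXiv:2603.02189 — 6 statements merged into one kernel-verified Lean document; each statement's English description precedes it below -/
import Mathlib

section
/- Let R = {0,b₁}×⋯×{0,bₛ} ⊆ ℝˢ be a cuboid and let a be a positive real with a ≤ min{b₁,…,bₛ}. Then there exist a positive integer N and a configuration C(a) ⊆ ℝᴺ such that: (i) every colouring of C(a) (with arbitrarily many colours) admits either a monochromatic pair of points at distance a (a monochromatic copy of {0,a}) or a rainbow copy of R; and (ii) C(a) is Ramsey, i.e. for every positive integer r there exists n such that every r-colouring of ℝⁿ admits a monochromatic copy of C(a). -/
/-- A copy of a configuration `C ⊆ ℝˢ` in `ℝⁿ`: the image of `C` under a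
distance-preserving map `ℝˢ → ℝⁿ`. -/
def IsCopy {s n : ℕ} (C : Set (EuclideanSpace ℝ (Fin s)))
    (X : Set (EuclideanSpace ℝ (Fin n))) : Prop :=
  ∃ f : EuclideanSpace ℝ (Fin s) → EuclideanSpace ℝ (Fin n), Isometry f ∧ X = f '' C

/-- A set `X` is monochromatic under a colouring `χ` if all its points receive
the same colour. -/
def Monochromatic {α κ : Type*} (χ : α → κ) (X : Set α) : Prop :=
  ∀ x ∈ X, ∀ y ∈ X, χ x = χ y

/-- A set `X` is rainbow under a colouring `χ` if all its points receive
pairwise distinct colours. -/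
def RainbowSet {α κ : Type*} (χ : α → κ) (X : Set α) : Prop :=
  Set.InjOn χ X

/-- The cuboid `{0, b 0} × ⋯ × {0, b (s-1)} ⊆ ℝˢ`. -/
def cuboid {s : ℕ} (b : Fin s → ℝ) : Set (EuclideanSpace ℝ (Fin s)) :=
  {x | ∀ i, x i = 0 ∨ x i = b i}

/-- A configuration is canonically Ramsey if some `ℝⁿ` admits, for every colouring
with arbitrarily many colours, a monochromatic or rainbow copy of it. -/
def CanonicallyRamsey {s : ℕ} (C : Set (EuclideanSpace ℝ (Fin s))) : Prop :=
  ∃ n : ℕ, 0 < n ∧ ∀ (κ : Type) (χ : EuclideanSpace ℝ (Fin n) → κ),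
    ∃ X : Set (EuclideanSpace ℝ (Fin n)), IsCopy C X ∧ (Monochromatic χ X ∨ RainbowSet χ X)

/-- A configuration is Ramsey if for every number of colours `r` there is `n` such
that every `r`-colouring of `ℝⁿ` admits a monochromatic copy of it. -/
def IsRamsey {s : ℕ} (C : Set (EuclideanSpace ℝ (Fin s))) : Prop :=
  ∀ r : ℕ, 0 < r → ∃ n : ℕ, ∀ χ : EuclideanSpace ℝ (Fin n) → Fin r,
    ∃ X : Set (EuclideanSpace ℝ (Fin n)), IsCopy C X ∧ Monochromatic χ X

/-!
`C(a)` is a set of vertices of a product of regular simplices, indexed by `(i, β) ∈ Fin s × Bool`: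
the factor `(i, false)` has edge `√(bᵢ² - a²)`, the factor `(i, true)` has edge `a` and
`m = 4 ^ s + 1` non-base vertices. Products of simplices are Ramsey by a product pigeonhole
argument, hence so is `C(a)`. For every `e : Fin s → Fin m` the cuboid embeds isometrically
with corner `A` sent to the point using the base vertex outside `A` and, for `i ∈ A`, the
second vertex of `(i, false)` and vertex `eᵢ` of `(i, true)`. Changing `eᵢ` moves a corner
containing `i` by exactly `a` and fixes the corners missing `i`; so without monochromatic pairs
at distance `a`, two given corners share a colour for at most `m ^ (s - 1)` choices of `e`, and
since `4 ^ s * m ^ (s - 1) < m ^ s` some `e` gives a rainbow cuboid.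
-/

open Finset Function

theorem exists_embedding_into_fiber_of_card_mul_lt_card {α κ K : Type*} [Fintype α] [Fintype κ]
    [DecidableEq κ] [Fintype K] (f : α → κ) (h : Fintype.card κ * Fintype.card K < Fintype.card α) :
    ∃ c, ∃ g : K ↪ α, ∀ j, f (g j) = c := by
  obtain ⟨c, hc⟩ := Fintype.exists_lt_card_fiber_of_mul_lt_card f h
  obtain ⟨g⟩ := Embedding.nonempty_of_card_le (α := K) (β := {x // f x = c})
    (by rw [Fintype.card_subtype]; exact hc.le)
  exact ⟨c, g.trans (Embedding.subtype _), fun j => (g j).2⟩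

theorem exists_monochromatic_subgrid_fin (t : ℕ) (K : Type*) [Fintype K] :
    ∀ (κ : Type*) [Fintype κ], ∃ M : ℕ, ∀ χ : (Fin t → Fin M) → κ,
      ∃ g : Fin t → K ↪ Fin M, ∃ c, ∀ u : Fin t → K, χ (fun w => g w (u w)) = c := by
  induction t with
  | zero =>
    exact fun κ _ =>
      ⟨0, fun χ => ⟨Fin.elim0, χ Fin.elim0, fun _ => congrArg χ (Subsingleton.elim _ _)⟩⟩
  | succ t ih =>
    intro κ _
    classical
    -- colour the remaining coordinates by the pattern of colours along coordinate `0`;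
    -- a monochromatic subgrid for the patterns, then pigeonhole on one pattern, suffices
    set L := Fintype.card κ * Fintype.card K + 1
    obtain ⟨M₀, hM₀⟩ := ih (Fin L → κ)
    let ι₀ := Fin.castLEEmb (le_max_left M₀ L)
    let ι₁ := Fin.castLEEmb (le_max_right M₀ L)
    refine ⟨max M₀ L, fun χ => ?_⟩
    obtain ⟨g, pattern, hg⟩ := hM₀ fun v z => χ (Fin.cons (ι₁ z) fun w => ι₀ (v w))
    obtain ⟨c, h, hh⟩ := exists_embedding_into_fiber_of_card_mul_lt_card (K := K) pattern
      (by simp [L])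
    refine ⟨Fin.cons (h.trans ι₁) fun w => (g w).trans ι₀, c, fun u => ?_⟩
    rw [← hh (u 0), ← hg (Fin.tail u)]
    congr 1
    funext w
    cases w using Fin.cases <;> rfl

theorem exists_monochromatic_subgrid (J K : Type*) [Fintype J] [Fintype K] (κ : Type*)
    [Fintype κ] : ∃ M : ℕ, ∀ χ : (J → Fin M) → κ,
      ∃ g : J → K ↪ Fin M, ∃ c, ∀ u : J → K, χ (fun w => g w (u w)) = c := by
  obtain ⟨M, hM⟩ := exists_monochromatic_subgrid_fin (Fintype.card J) K κ
  let e := Fintype.equivFin J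
  refine ⟨M, fun χ => ?_⟩
  obtain ⟨g, c, hg⟩ := hM fun v => χ (v ∘ e)
  exact ⟨g ∘ e, c, fun u => by simpa [comp_def] using hg (u ∘ e.symm)⟩

section SimplexProduct

variable {J K : Type*} [DecidableEq K]

-- the vertex `u` of `∏ w, Δ w`, where `Δ w` is the regular simplex `(D w / √2) • {eₖ | k : K}`
-- of edge length `|D w|`
noncomputable def simplexProductPoint (D : J → ℝ) (u : J → K) : EuclideanSpace ℝ (J × K) :=
  WithLp.toLp 2 fun p => if p.2 = u p.1 then D p.1 / √2 else 0

variable [Fintype J] [Fintype K]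

theorem dist_simplexProductPoint_sq (D : J → ℝ) (u u' : J → K) :
    dist (simplexProductPoint D u) (simplexProductPoint D u') ^ 2 =
      ∑ w with u w ≠ u' w, D w ^ 2 := by
  rw [EuclideanSpace.dist_eq, Real.sq_sqrt (by positivity), Fintype.sum_prod_type, sum_filter]
  refine sum_congr rfl fun w _ => ?_
  split_ifs with h
  · rw [Fintype.sum_eq_add (u w) (u' w) h fun k hk => by simp [simplexProductPoint, hk.1, hk.2]]
    simp only [simplexProductPoint, Real.dist_eq, if_pos, if_neg h, if_neg (Ne.symm h)]
    simp [div_pow]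
  · simp [simplexProductPoint, not_not.mp h]

theorem dist_simplexProductPoint_of_eqOn_compl (D : J → ℝ) {u u' : J → K} {w₀ : J}
    (hne : u w₀ ≠ u' w₀) (heq : ∀ w ≠ w₀, u w = u' w) :
    dist (simplexProductPoint D u) (simplexProductPoint D u') = |D w₀| := by
  have hdiff : ({w | u w ≠ u' w} : Finset J) = {w₀} := by
    ext w
    simp only [mem_filter, mem_univ, true_and, mem_singleton]
    exact ⟨not_imp_comm.mp (heq w), fun h => h ▸ hne⟩
  rw [← Real.sqrt_sq dist_nonneg, dist_simplexProductPoint_sq, hdiff, sum_singleton,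
    Real.sqrt_sq_eq_abs]

end SimplexProduct

noncomputable def extendByZero {ι ι' : Type*} (j : ι ↪ ι') (x : EuclideanSpace ℝ ι) :
    EuclideanSpace ℝ ι' :=
  WithLp.toLp 2 (extend j x 0)

theorem isometry_extendByZero {ι ι' : Type*} [Fintype ι] [Fintype ι'] (j : ι ↪ ι') :
    Isometry (extendByZero j) := by
  classical
  refine Isometry.of_dist_eq fun x y => ?_
  simp only [EuclideanSpace.dist_eq, extendByZero]
  congr 1
  rw [← sum_subset (subset_univ (univ.map j)), sum_map]
  · simp [j.injective.extend_apply]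
  · intro i' _ hi'
    have hnot : ¬∃ i, j i = i' := fun ⟨i, hi⟩ => hi' (mem_map.mpr ⟨i, mem_univ i, hi⟩)
    simp [extend_apply' _ _ _ hnot]

def fiberwiseEmbedding {J K K' : Type*} (g : J → K ↪ K') : J × K ↪ J × K' where
  toFun p := (p.1, g p.1 p.2)
  inj' := by
    rintro ⟨w, k⟩ ⟨w', k'⟩ h
    simp only [Prod.mk.injEq] at h
    obtain ⟨rfl, h⟩ := h
    rw [(g w).injective h]

theorem extendByZero_simplexProductPoint {J K K' : Type*} [DecidableEq K] [DecidableEq K']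
    (g : J → K ↪ K') (D : J → ℝ) (u : J → K) :
    extendByZero (fiberwiseEmbedding g) (simplexProductPoint D u) =
      simplexProductPoint D fun w => g w (u w) := by
  ext ⟨w, k'⟩
  by_cases hk' : ∃ k, g w k = k'
  · obtain ⟨k, rfl⟩ := hk'
    simp only [extendByZero, simplexProductPoint, WithLp.ofLp_toLp]
    rw [show (w, g w k) = fiberwiseEmbedding g (w, k) from rfl,
      (fiberwiseEmbedding g).injective.extend_apply]
    simp [(g w).injective.eq_iff]
  · have hnot : ¬∃ p, fiberwiseEmbedding g p = (w, k') := by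
      rintro ⟨⟨w₀, k⟩, hp⟩
      obtain ⟨rfl, hk⟩ := Prod.mk.inj hp
      exact hk' ⟨k, hk⟩
    simp only [extendByZero, simplexProductPoint, WithLp.ofLp_toLp, extend_apply' _ _ _ hnot]
    rw [if_neg fun h => hk' ⟨u w, h.symm⟩]
    rfl

theorem IsRamsey.mono {N : ℕ} {C C' : Set (EuclideanSpace ℝ (Fin N))} (hC' : IsRamsey C')
    (h : C ⊆ C') : IsRamsey C := by
  intro r hr
  obtain ⟨n, hn⟩ := hC' r hr
  refine ⟨n, fun χ => ?_⟩
  obtain ⟨_, ⟨f, hf, rfl⟩, hmono⟩ := hn χ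
  exact ⟨f '' C, ⟨f, hf, rfl⟩, fun x hx y hy =>
    hmono x (Set.image_mono h hx) y (Set.image_mono h hy)⟩

theorem isRamsey_image_range_simplexProductPoint {J K : Type*} [Fintype J] [Fintype K]
    [DecidableEq K] {N : ℕ} (D : J → ℝ)
    (Φ : EuclideanSpace ℝ (J × K) ≃ₗᵢ[ℝ] EuclideanSpace ℝ (Fin N)) :
    IsRamsey (Φ '' Set.range (simplexProductPoint D)) := by
  intro r _
  obtain ⟨M, hM⟩ := exists_monochromatic_subgrid J K (Fin r)
  let Ψ := LinearIsometryEquiv.piLpCongrLeft 2 ℝ ℝ (Fintype.equivFin (J × Fin M))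
  refine ⟨Fintype.card (J × Fin M), fun χ => ?_⟩
  obtain ⟨g, c, hg⟩ := hM fun u => χ (Ψ (simplexProductPoint D u))
  let f := Ψ ∘ extendByZero (fiberwiseEmbedding g) ∘ Φ.symm
  have hf : Isometry f := Ψ.isometry.comp ((isometry_extendByZero _).comp Φ.symm.isometry)
  have hfc : ∀ u, χ (f (Φ (simplexProductPoint D u))) = c := fun u => by
    simp [f, extendByZero_simplexProductPoint, hg]
  refine ⟨f '' (Φ '' Set.range (simplexProductPoint D)), ⟨f, hf, rfl⟩, ?_⟩
  rintro _ ⟨_, ⟨_, ⟨u, rfl⟩, rfl⟩, rfl⟩ _ ⟨_, ⟨_, ⟨u', rfl⟩, rfl⟩, rfl⟩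
  rw [hfc, hfc]

section Counting

variable {ι α κ : Type*} [Fintype ι] [DecidableEq ι] [Fintype α]

theorem card_mul_le_pow_of_eqOn_compl (i : ι) (S : Finset (ι → α))
    (hS : ∀ e ∈ S, ∀ e' ∈ S, (∀ j ≠ i, e j = e' j) → e i = e' i) :
    #S * Fintype.card α ≤ Fintype.card α ^ Fintype.card ι := by
  have hinj : Set.InjOn (fun e : ι → α => fun j : {j // j ≠ i} => e j) S := by
    intro e he e' he' h
    have hoff : ∀ j ≠ i, e j = e' j := fun j hj => congrFun h ⟨j, hj⟩
    funext j
    by_cases hj : j = i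
    · exact hj ▸ hS e he e' he' hoff
    · exact hoff j hj
  calc #S * Fintype.card α
      ≤ Fintype.card ({j // j ≠ i} → α) * Fintype.card α :=
        Nat.mul_le_mul_right _ (card_le_card_of_injOn _ (fun _ _ => mem_univ _) hinj)
    _ = Fintype.card (ι → α) := by
        rw [Fintype.card_congr (Equiv.piSplitAt i fun _ => α), Fintype.card_prod, mul_comm]
    _ = Fintype.card α ^ Fintype.card ι := Fintype.card_fun

variable [DecidableEq κ] {c : (ι → α) → Finset ι → κ}

theorem card_filter_eq_mul_le_pow
    (hout : ∀ e e' B i, i ∉ B → (∀ j ≠ i, e j = e' j) → c e B = c e' B)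
    (hin : ∀ e e' A i, i ∈ A → (∀ j ≠ i, e j = e' j) → c e A = c e' A → e i = e' i)
    {A B : Finset ι} (hAB : A ≠ B) :
    #{e | c e A = c e B} * Fintype.card α ≤ Fintype.card α ^ Fintype.card ι := by
  obtain ⟨i, hi⟩ := not_forall.mp (mt Finset.ext hAB)
  have key : ∀ {A B : Finset ι}, i ∈ A → i ∉ B →
      #{e | c e A = c e B} * Fintype.card α ≤ Fintype.card α ^ Fintype.card ι :=
    fun hA hB => card_mul_le_pow_of_eqOn_compl i _ fun e he e' he' hoff =>
      hin e e' _ i hA hoff <| by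
        rw [(mem_filter.1 he).2, hout e e' _ i hB hoff, (mem_filter.1 he').2]
  by_cases hA : i ∈ A
  · exact key hA (by tauto)
  · rw [filter_congr fun _ _ => eq_comm]
    exact key (by tauto) hA

theorem exists_injective_of_eqOn_compl (hα : 4 ^ Fintype.card ι < Fintype.card α)
    (hout : ∀ e e' B i, i ∉ B → (∀ j ≠ i, e j = e' j) → c e B = c e' B)
    (hin : ∀ e e' A i, i ∈ A → (∀ j ≠ i, e j = e' j) → c e A = c e' A → e i = e' i) :
    ∃ e, Injective (c e) := by
  classical
  by_contra! h
  set n := Fintype.card α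
  set pairs := (univ : Finset (Finset ι)).offDiag
  have hcover : (univ : Finset (ι → α)) ⊆ pairs.biUnion fun p => {e | c e p.1 = c e p.2} := by
    intro e _
    obtain ⟨A, B, hAB, hne⟩ : ∃ A B, c e A = c e B ∧ A ≠ B := by simpa [Injective] using h e
    simpa [pairs] using ⟨A, B, hne, hAB⟩
  have hpairs : #pairs ≤ 4 ^ Fintype.card ι := by
    rw [offDiag_card, card_univ, Fintype.card_finset, ← mul_pow]
    exact Nat.sub_le _ _
  have : n ^ Fintype.card ι * n ≤ 4 ^ Fintype.card ι * n ^ Fintype.card ι :=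
    calc n ^ Fintype.card ι * n = #(univ : Finset (ι → α)) * n := by
          rw [card_univ, Fintype.card_fun]
      _ ≤ ∑ p ∈ pairs, #{e | c e p.1 = c e p.2} * n := by
          rw [← sum_mul]
          exact Nat.mul_le_mul_right _ ((card_le_card hcover).trans card_biUnion_le)
      _ ≤ ∑ _p ∈ pairs, n ^ Fintype.card ι :=
          sum_le_sum fun p hp => card_filter_eq_mul_le_pow hout hin (mem_offDiag.1 hp).2.2
      _ ≤ 4 ^ Fintype.card ι * n ^ Fintype.card ι := by
          rw [sum_const, smul_eq_mul]
          exact Nat.mul_le_mul_right _ hpairs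
  have hn : 0 < n ^ Fintype.card ι := pow_pos (by omega) _
  nlinarith

end Counting

section Cuboid

variable {s : ℕ} {α : Type*}

noncomputable def sideLength (a : ℝ) (b : Fin s → ℝ) : Fin s × Bool → ℝ
  | (_, true) => a
  | (i, false) => √(b i ^ 2 - a ^ 2)

-- `none` is the common base vertex of all the simplices
def activeVertex (e : Fin s → α) : Fin s × Bool → Option (Option α)
  | (i, true) => some (some (e i))
  | (_, false) => some none

theorem activeVertex_ne_none (e : Fin s → α) (w : Fin s × Bool) : activeVertex e w ≠ none := by
  obtain ⟨i, _ | _⟩ := w <;> simp [activeVertex]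

def cornerVertex (e : Fin s → α) (A : Finset (Fin s)) (w : Fin s × Bool) : Option (Option α) :=
  if w.1 ∈ A then activeVertex e w else none

theorem cornerVertex_eq_of_eqOn_compl {e e' : Fin s → α} {B : Finset (Fin s)} {i : Fin s}
    (hB : i ∉ B) (hoff : ∀ j ≠ i, e j = e' j) : cornerVertex e B = cornerVertex e' B := by
  funext ⟨j, β⟩
  by_cases hj : j ∈ B
  · cases β <;> simp [cornerVertex, activeVertex, hj, hoff j (ne_of_mem_of_not_mem hj hB)]
  · simp [cornerVertex, hj]

variable [DecidableEq α]

-- the `i`-th coordinate moves from the base vertex towards `activeVertex e (i, β)` in both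
-- factors `(i, false)` and `(i, true)`, which are orthogonal with sides `√(bᵢ² - a²)` and `a`
noncomputable def cuboidEmbedding (a : ℝ) (b : Fin s → ℝ) (e : Fin s → α)
    (t : EuclideanSpace ℝ (Fin s)) : EuclideanSpace ℝ ((Fin s × Bool) × Option (Option α)) :=
  WithLp.toLp 2 fun p =>
    (if p.2 = none then 1 - t p.1.1 / b p.1.1
      else if p.2 = activeVertex e p.1 then t p.1.1 / b p.1.1 else 0) * (sideLength a b p.1 / √2)

variable {a : ℝ} {b : Fin s → ℝ}

theorem isometry_cuboidEmbedding [Fintype α] (ha : 0 ≤ a) (hab : ∀ i, a ≤ b i)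
    (hb : ∀ i, b i ≠ 0) (e : Fin s → α) : Isometry (cuboidEmbedding a b e) := by
  refine Isometry.of_dist_eq fun t t' => ?_
  have hfactor : ∀ w : Fin s × Bool,
      ∑ k, dist (cuboidEmbedding a b e t (w, k)) (cuboidEmbedding a b e t' (w, k)) ^ 2 =
        ((t w.1 - t' w.1) / b w.1) ^ 2 * sideLength a b w ^ 2 := by
    intro w
    rw [Fintype.sum_eq_add none (activeVertex e w) (activeVertex_ne_none e w).symm
      fun k hk => by simp [cuboidEmbedding, hk.1, hk.2]]
    simp only [cuboidEmbedding, Real.dist_eq, sq_abs, if_pos, if_neg (activeVertex_ne_none e w),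
      ← sub_mul, mul_pow, div_pow, Real.sq_sqrt zero_le_two]
    ring
  have hside : ∀ i, sideLength a b (i, false) ^ 2 = b i ^ 2 - a ^ 2 := fun i =>
    Real.sq_sqrt (by nlinarith [hab i])
  rw [EuclideanSpace.dist_eq, EuclideanSpace.dist_eq, Fintype.sum_prod_type,
    Fintype.sum_prod_type]
  congr 1
  refine sum_congr rfl fun i _ => ?_
  rw [Fintype.sum_bool, hfactor, hfactor, hside, sideLength, Real.dist_eq, sq_abs]
  field_simp [hb i]
  ring

theorem cuboidEmbedding_of_mem_cuboid (hb : ∀ i, b i ≠ 0) (e : Fin s → α) {t}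
    (ht : t ∈ cuboid b) :
    cuboidEmbedding a b e t =
      simplexProductPoint (sideLength a b) (cornerVertex e {i | t i = b i}) := by
  ext ⟨⟨i, β⟩, k⟩
  rcases ht i with h | h
  · simp [cuboidEmbedding, simplexProductPoint, cornerVertex, h, (hb i).symm]
  · simp [cuboidEmbedding, simplexProductPoint, cornerVertex, h, hb i]
    rintro rfl h'
    exact absurd h'.symm (activeVertex_ne_none e _)

theorem dist_simplexProductPoint_cornerVertex [Fintype α]
    {e e' : Fin s → α} {A : Finset (Fin s)} {i : Fin s} (hA : i ∈ A) (hne : e i ≠ e' i)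
    (hoff : ∀ j ≠ i, e j = e' j) :
    dist (simplexProductPoint (sideLength a b) (cornerVertex e A))
      (simplexProductPoint (sideLength a b) (cornerVertex e' A)) = |a| := by
  refine dist_simplexProductPoint_of_eqOn_compl _ (w₀ := (i, true))
    (by simpa [cornerVertex, activeVertex, hA]) ?_
  rintro ⟨j, β⟩ hw
  by_cases hj : j ∈ A
  · cases β
    · simp [cornerVertex, activeVertex, hj]
    · simp [cornerVertex, activeVertex, hj, hoff j (by rintro rfl; exact hw rfl)]
  · simp [cornerVertex, hj]

end Cuboid

/-- **Lemma 2 (existence of `C(a)`).** Let `R = {0,b₁} × ⋯ × {0,bₛ}` be a cuboid and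
`0 < a ≤ min{b₁,…,bₛ}`. Then there is a finite configuration `C(a) ⊆ ℝᴺ` such that
(i) every colouring of it admits a monochromatic pair of points at distance `a`
or a rainbow copy of `R`, and (ii) `C(a)` is Ramsey. -/
theorem exists_config_mono_dist_or_rainbow_cuboid (s : ℕ) (hs : 0 < s)
    (b : Fin s → ℝ) (hb : ∀ i, 0 < b i) (a : ℝ) (ha : 0 < a)
    (hab : ∀ i, a ≤ b i) :
    ∃ N : ℕ, 0 < N ∧ ∃ C : Set (EuclideanSpace ℝ (Fin N)), C.Finite ∧
      (∀ (κ : Type) (χ : EuclideanSpace ℝ (Fin N) → κ),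
        (∃ x ∈ C, ∃ y ∈ C, dist x y = a ∧ χ x = χ y) ∨
        (∃ X : Set (EuclideanSpace ℝ (Fin N)), X ⊆ C ∧ IsCopy (cuboid b) X ∧
          RainbowSet χ X)) ∧
      IsRamsey C := by
  classical
  let ι := (Fin s × Bool) × Option (Option (Fin (4 ^ s + 1)))
  let Φ := LinearIsometryEquiv.piLpCongrLeft 2 ℝ ℝ (Fintype.equivFin ι)
  let corner (e : Fin s → Fin (4 ^ s + 1)) (A : Finset (Fin s)) :=
    Φ (simplexProductPoint (sideLength a b) (cornerVertex e A))
  refine ⟨Fintype.card ι, Fintype.card_pos_iff.2 ⟨((⟨0, hs⟩, true), none)⟩,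
    Set.range (uncurry corner), Set.finite_range _, fun κ χ => ?_,
    (isRamsey_image_range_simplexProductPoint (sideLength a b) Φ).mono ?_⟩
  · refine or_iff_not_imp_left.2 fun hmono => ?_
    obtain ⟨e, he⟩ := exists_injective_of_eqOn_compl (c := fun e A => χ (corner e A))
      (by simp)
      (fun e e' B i hB hoff => by simp only [corner, cornerVertex_eq_of_eqOn_compl hB hoff])
      fun e e' A i hA hoff hc => by
        by_contra hne
        refine hmono ⟨_, ⟨(e, A), rfl⟩, _, ⟨(e', A), rfl⟩, ?_, hc⟩
        rw [uncurry_apply_pair, uncurry_apply_pair, Φ.dist_map,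
          dist_simplexProductPoint_cornerVertex hA hne hoff, abs_of_pos ha]
    have hX : (Φ ∘ cuboidEmbedding a b e) '' cuboid b ⊆ Set.range (corner e) := by
      rintro _ ⟨t, ht, rfl⟩
      exact ⟨_, congrArg Φ (cuboidEmbedding_of_mem_cuboid (fun i => (hb i).ne') e ht).symm⟩
    refine ⟨_, hX.trans ?_, ⟨_, Φ.isometry.comp ?_, rfl⟩, he.injOn_range.mono hX⟩
    · rintro _ ⟨A, rfl⟩
      exact ⟨(e, A), rfl⟩
    · exact isometry_cuboidEmbedding ha.le hab (fun i => (hb i).ne') e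
  · rintro _ ⟨⟨e, A⟩, rfl⟩
    exact ⟨_, ⟨_, rfl⟩, rfl⟩
end

section
/- Let h, n′₁,…,n′ₛ be positive integers. Then there exist positive integers n₁,…,nₛ such that the following holds. For each i let Tᵢ be the complete nᵢ-ary tree of height h. Suppose T₁×⋯×Tₛ is coloured (with arbitrarily many colours) so that within every copy of every Tᵢ, no two siblings receive the same colour. Then for each i there is a complete n′ᵢ-ary subtree T′ᵢ of Tᵢ of height h such that within every copy of every T′ᵢ inside T′₁×⋯×T′ₛ, no vertex receives the same colour as any of its ancestors. -/
/-!
Treat one coordinate at a time and view the colouring as a family, indexed by the values `a` of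
the other coordinates, of colourings of that tree in which siblings differ. For each `a` and each
vertex `q` on the path to a vertex `p`, at most one child of `p` repeats the colour of `q`; so if
the family has `N` members, among `n' + h * N` children of `p` there are `n'` whose colours differ
from those of all ancestors of `p`, and growing the subtree greedily from the root through such
children makes it ancestor-distinct. Coordinates are handled from the last to the first, each one
after the later ones have been restricted to their subtrees, so that its `N` depends only on `n'`
and on the arities of the earlier coordinates, which are fixed first.
-/

/-- The vertex set of the complete `n`-ary tree of height `h`:
finite sequences over `Fin n` of length at most `h`. The empty sequence is the root. -/
def TreeVert (n h : ℕ) : Type := {l : List (Fin n) // l.length ≤ h}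

/-- Two vertices are siblings if they are distinct, have the same positive length,
and agree in all entries except the last. -/
def Siblings {n h : ℕ} (u v : TreeVert n h) : Prop :=
  u ≠ v ∧ ∃ (p : List (Fin n)) (x y : Fin n), u.val = p ++ [x] ∧ v.val = p ++ [y]

/-- `u` is a (proper) ancestor of `v` if `u` is a proper prefix of `v`. -/
def IsAncestor {n h : ℕ} (u v : TreeVert n h) : Prop :=
  u.val <+: v.val ∧ u ≠ v

/-- An embedding of the complete `n'`-ary tree of height `h` into the complete
`n`-ary tree of height `h` as a complete `n'`-ary subtree: an injection sending
the root to the root and the children of each vertex `u` to children of `ψ u`. -/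
def IsSubtreeEmbedding {n n' h : ℕ} (ψ : TreeVert n' h → TreeVert n h) : Prop :=
  Function.Injective ψ ∧
  (∀ u : TreeVert n' h, u.val = [] → (ψ u).val = []) ∧
  (∀ (u : List (Fin n')) (hu : u.length < h) (x : Fin n'),
    ∃ y : Fin n,
      (ψ ⟨u ++ [x], by simpa using hu⟩).val = (ψ ⟨u, hu.le⟩).val ++ [y])

open Function

noncomputable instance (n h : ℕ) : Fintype (TreeVert n h) :=
  (List.finite_length_le (Fin n) h).fintype

section Colourings

variable {n h : ℕ} {κ : Type*}

def SiblingDistinct (c : TreeVert n h → κ) : Prop :=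
  ∀ u v, Siblings u v → c u ≠ c v

def AncestorDistinct (c : TreeVert n h → κ) : Prop :=
  ∀ u v, IsAncestor u v → c u ≠ c v

end Colourings

namespace List

variable {α β : Type*}

lemma exists_concat_of_prefix_of_ne {l₁ l₂ : List α} (hp : l₁ <+: l₂) (hne : l₁ ≠ l₂) :
    ∃ w x, l₂ = w ++ [x] ∧ l₁ <+: w := by
  rcases l₂.eq_nil_or_concat' with rfl | ⟨w, x, rfl⟩
  · exact absurd (prefix_nil.1 hp) hne
  · exact ⟨w, x, rfl, (prefix_concat_iff.1 hp).resolve_left hne⟩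

/-- Reads `l` from the root, choosing `g p x` as the image of the child `x` of a vertex with
image `p`. -/
def pathMap (g : List β → α → β) (l : List α) : List β :=
  l.foldl (fun p x => p ++ [g p x]) []

variable (g : List β → α → β)

@[simp] lemma pathMap_nil : pathMap g [] = [] := rfl

lemma pathMap_concat (l : List α) (x : α) :
    pathMap g (l ++ [x]) = pathMap g l ++ [g (pathMap g l) x] :=
  foldl_concat ..

@[simp] lemma length_pathMap (l : List α) : (pathMap g l).length = l.length := by
  induction l using reverseRecOn with
  | nil => rfl
  | append_singleton l x ih => simp [pathMap_concat, ih]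

lemma IsPrefix.pathMap {l₁ l₂ : List α} (hp : l₁ <+: l₂) : l₁.pathMap g <+: l₂.pathMap g := by
  obtain ⟨t, rfl⟩ := hp
  induction t using reverseRecOn with
  | nil => simp
  | append_singleton t x ih =>
    rw [← append_assoc, pathMap_concat]
    exact ih.trans (prefix_append _ _)

lemma pathMap_injective (hg : ∀ p, Injective (g p)) : Injective (pathMap g) := by
  intro l₁ l₂ he
  induction l₁ using reverseRecOn generalizing l₂ with
  | nil => simpa using (congrArg length he).symm
  | append_singleton l₁ x ih =>
    rcases l₂.eq_nil_or_concat' with rfl | ⟨l₂, y, rfl⟩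
    · simp [pathMap_concat] at he
    · rw [pathMap_concat, pathMap_concat] at he
      obtain ⟨hl, hx⟩ := append_inj' he rfl
      obtain rfl := ih hl
      rw [hg _ (singleton_inj.1 hx)]

end List

section Subtree

variable {n n' h : ℕ}

def treeMap (g : List (Fin n) → Fin n' → Fin n) (u : TreeVert n' h) : TreeVert n h :=
  ⟨u.val.pathMap g, (List.length_pathMap g u.val).trans_le u.2⟩

lemma isSubtreeEmbedding_treeMap (g : List (Fin n) → Fin n' → Fin n)
    (hg : ∀ p, Injective (g p)) : IsSubtreeEmbedding (treeMap (h := h) g) :=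
  ⟨fun _ _ he => Subtype.ext (List.pathMap_injective g hg (congrArg Subtype.val he)),
    fun u hu => by simp [treeMap, hu],
    fun u _ x => ⟨g (u.pathMap g) x, List.pathMap_concat g u x⟩⟩

end Subtree

section Greedy

variable {n n' h : ℕ} {α κ : Type*}

open Classical in
noncomputable def childrenWithColour (c : TreeVert n h → κ) (p : List (Fin n)) (γ : κ) :
    Finset (Fin n) :=
  Finset.univ.filter fun y => ∃ v : TreeVert n h, v.val = p ++ [y] ∧ c v = γ

lemma mem_childrenWithColour {c : TreeVert n h → κ} {p : List (Fin n)} {γ : κ} {y : Fin n} :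
    y ∈ childrenWithColour c p γ ↔ ∃ v : TreeVert n h, v.val = p ++ [y] ∧ c v = γ := by
  simp [childrenWithColour]

lemma card_childrenWithColour_le_one {c : TreeVert n h → κ} (hc : SiblingDistinct c)
    (p : List (Fin n)) (γ : κ) : (childrenWithColour c p γ).card ≤ 1 := by
  refine Finset.card_le_one.2 fun y hy y' hy' => ?_
  obtain ⟨v, hv, hvγ⟩ := mem_childrenWithColour.1 hy
  obtain ⟨v', hv', hvγ'⟩ := mem_childrenWithColour.1 hy'
  by_contra hne
  have hvv' : v ≠ v' := fun he => hne (by simpa [hv, hv'] using congrArg Subtype.val he)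
  exact hc v v' ⟨hvv', p, y, y', hv, hv'⟩ (hvγ.trans hvγ'.symm)

open Classical in
noncomputable def badChildren (χ : α → TreeVert n h → κ) (p : List (Fin n)) : Finset (Fin n) :=
  Finset.univ.filter fun y => ∃ (a : α) (v q : TreeVert n h),
    v.val = p ++ [y] ∧ q.val <+: p ∧ χ a v = χ a q

lemma mem_badChildren {χ : α → TreeVert n h → κ} {p : List (Fin n)} {y : Fin n} :
    y ∈ badChildren χ p ↔ ∃ (a : α) (v q : TreeVert n h),
      v.val = p ++ [y] ∧ q.val <+: p ∧ χ a v = χ a q := by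
  simp [badChildren]

lemma card_prefixes_le (p : List (Fin n)) :
    (Finset.univ.filter fun q : TreeVert n h => q.val <+: p ∧ q.val.length < h).card ≤ h := by
  refine (Finset.card_le_card_of_injOn (fun q => q.val.length) (t := Finset.range h)
    (fun q hq => ?_) fun q hq q' hq' he => ?_).trans_eq (Finset.card_range h)
  · exact Finset.mem_range.2 (Finset.mem_filter.1 hq).2.2
  · refine Subtype.ext ?_
    rw [List.prefix_iff_eq_take.1 (Finset.mem_filter.1 hq).2.1,
      List.prefix_iff_eq_take.1 (Finset.mem_filter.1 hq').2.1]
    exact congrArg (p.take ·) he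

lemma card_badChildren_le [Fintype α] {χ : α → TreeVert n h → κ}
    (hχ : ∀ a, SiblingDistinct (χ a)) (p : List (Fin n)) :
    (badChildren χ p).card ≤ h * Fintype.card α := by
  classical
  set Q := Finset.univ.filter fun q : TreeVert n h => q.val <+: p ∧ q.val.length < h
  have hsub : badChildren χ p ⊆
      (Finset.univ ×ˢ Q).biUnion fun aq => childrenWithColour (χ aq.1) p (χ aq.1 aq.2) := by
    intro y hy
    obtain ⟨a, v, q, hv, hq, hvq⟩ := mem_badChildren.1 hy
    have hlen : q.val.length < h := by
      have := v.2
      rw [hv, List.length_append] at this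
      exact hq.length_le.trans_lt (by simpa using this)
    exact Finset.mem_biUnion.2 ⟨(a, q), by simp [Q, hq, hlen],
      mem_childrenWithColour.2 ⟨v, hv, hvq⟩⟩
  calc (badChildren χ p).card
      ≤ (Finset.univ ×ˢ Q).card * 1 :=
        (Finset.card_le_card hsub).trans
          (Finset.card_biUnion_le_card_mul _ _ _ fun aq _ =>
            card_childrenWithColour_le_one (hχ aq.1) p _)
    _ ≤ h * Fintype.card α := by
        rw [mul_one, Finset.card_product, Finset.card_univ, mul_comm]
        exact Nat.mul_le_mul_right _ (card_prefixes_le p)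

lemma exists_embedding_forall_notMem {β : Type*} [Fintype α] [Fintype β] [DecidableEq β]
    {s : Finset β} (hs : Fintype.card α + s.card ≤ Fintype.card β) :
    ∃ f : α ↪ β, ∀ x, f x ∉ s := by
  obtain ⟨f, hf⟩ := Function.Embedding.exists_of_card_le_finset (α := α) (s := sᶜ)
    (by rw [Finset.card_compl]; omega)
  exact ⟨f, fun x => Finset.mem_compl.1 (hf (Set.mem_range_self x))⟩

theorem exists_isSubtreeEmbedding_ancestorDistinct [Fintype α] (χ : α → TreeVert n h → κ)
    (hχ : ∀ a, SiblingDistinct (χ a)) (hn : n' + h * Fintype.card α ≤ n) :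
    ∃ ψ : TreeVert n' h → TreeVert n h,
      IsSubtreeEmbedding ψ ∧ ∀ a, AncestorDistinct (χ a ∘ ψ) := by
  have hgood : ∀ p, ∃ f : Fin n' ↪ Fin n, ∀ x, f x ∉ badChildren χ p := fun p =>
    exists_embedding_forall_notMem (by
      simpa using (Nat.add_le_add_left (card_badChildren_le hχ p) _).trans hn)
  choose f hf using hgood
  let g p : Fin n' → Fin n := f p
  refine ⟨treeMap g, isSubtreeEmbedding_treeMap g fun p => (f p).injective, ?_⟩
  rintro a u u' ⟨hpre, hne⟩ hcol
  obtain ⟨w, x, hw, huw⟩ :=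
    List.exists_concat_of_prefix_of_ne hpre fun he => hne (Subtype.ext he)
  refine hf (w.pathMap g) x (mem_badChildren.2 ⟨a, treeMap g u', treeMap g u,
    ?_, huw.pathMap g, hcol.symm⟩)
  simp only [treeMap, hw, List.pathMap_concat]
  rfl

end Greedy

theorem exists_isSubtreeEmbedding_ancestorDistinct_pi (h s : ℕ) (n' : Fin s → ℕ)
    (P : Type) [Fintype P] :
    ∃ n : Fin s → ℕ, n' ≤ n ∧
      ∀ (κ : Type) (χ : P → ((i : Fin s) → TreeVert (n i) h) → κ),
        (∀ (p : P) (v : (i : Fin s) → TreeVert (n i) h) i,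
          SiblingDistinct fun u => χ p (update v i u)) →
        ∃ ψ : (i : Fin s) → TreeVert (n' i) h → TreeVert (n i) h,
          (∀ i, IsSubtreeEmbedding (ψ i)) ∧
          ∀ (p : P) (v : (i : Fin s) → TreeVert (n' i) h) i,
            AncestorDistinct fun u => χ p (update (fun j => ψ j (v j)) i (ψ i u)) := by
  induction s generalizing P with
  | zero =>
    exact ⟨0, fun i => i.elim0, fun _ _ _ => ⟨fun i => i.elim0, fun i => i.elim0,
      fun _ _ i => i.elim0⟩⟩
  | succ s ih =>
    obtain ⟨n₀, hn₀⟩ : ∃ m,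
        n' 0 + h * Fintype.card (P × ((j : Fin s) → TreeVert (n' j.succ) h)) ≤ m :=
      ⟨_, le_rfl⟩
    obtain ⟨nt, hnt, Ht⟩ := ih (fun j => n' j.succ) (P × TreeVert n₀ h)
    -- Writing the arities as `n 0` and `n j.succ` rather than through `Fin.cons` keeps the
    -- `Fin.cons` lemmas applicable to the dependent vertex types below.
    obtain ⟨n, rfl, rfl⟩ : ∃ n : Fin (s + 1) → ℕ, n 0 = n₀ ∧ (fun j => n j.succ) = nt :=
      ⟨Fin.cons n₀ nt, rfl, rfl⟩
    refine ⟨n, Fin.cases ((Nat.le_add_right _ _).trans hn₀) hnt, fun κ χ hχ => ?_⟩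
    obtain ⟨ψt, hψt, Hψt⟩ := Ht κ (fun pu w => χ pu.1 (Fin.cons pu.2 w)) fun pu w j => by
      simpa only [Fin.cons_update] using hχ pu.1 (Fin.cons pu.2 w) j.succ
    obtain ⟨ψ₀, hψ₀, Hψ₀⟩ := exists_isSubtreeEmbedding_ancestorDistinct
      (fun pw u => χ pw.1 (Fin.cons u fun j => ψt j (pw.2 j))) (fun pw u u' => by
        simpa only [Fin.update_cons_zero] using
          hχ pw.1 (Fin.cons u fun j => ψt j (pw.2 j)) 0 u u')
      hn₀
    refine ⟨Fin.cons ψ₀ ψt, Fin.cases hψ₀ hψt, fun p v i => ?_⟩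
    have hv : (fun j => Fin.cons (α := fun i => TreeVert (n' i) h → TreeVert (n i) h) ψ₀ ψt j
        (v j)) = Fin.cons (ψ₀ (v 0)) fun j => ψt j (Fin.tail v j) := by
      funext j
      cases j using Fin.cases <;> rfl
    rw [hv]
    cases i using Fin.cases with
    | zero =>
      simpa only [Fin.update_cons_zero, Fin.cons_zero, comp_def] using Hψ₀ (p, Fin.tail v)
    | succ j =>
      simpa only [← Fin.cons_update, Fin.cons_succ] using Hψt (p, ψ₀ (v 0)) (Fin.tail v) j

theorem exists_proper_subtrees_general (s h : ℕ)
    (n' : Fin s → ℕ) (hn' : ∀ i, 0 < n' i) :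
    ∃ n : Fin s → ℕ, (∀ i, 0 < n i) ∧
      ∀ (κ : Type) (χ : ((i : Fin s) → TreeVert (n i) h) → κ),
        (∀ (v : (i : Fin s) → TreeVert (n i) h) (i : Fin s)
            (u u' : TreeVert (n i) h), Siblings u u' →
              χ (Function.update v i u) ≠ χ (Function.update v i u')) →
        ∃ ψ : (i : Fin s) → TreeVert (n' i) h → TreeVert (n i) h,
          (∀ i, IsSubtreeEmbedding (ψ i)) ∧
          ∀ (v : (i : Fin s) → TreeVert (n' i) h) (i : Fin s)
              (u u' : TreeVert (n' i) h), IsAncestor u u' →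
            χ (Function.update (fun j => ψ j (v j)) i (ψ i u)) ≠
              χ (Function.update (fun j => ψ j (v j)) i (ψ i u')) := by
  obtain ⟨n, hn'n, H⟩ := exists_isSubtreeEmbedding_ancestorDistinct_pi h s n' PUnit
  refine ⟨n, fun i => (hn' i).trans_le (hn'n i), fun κ χ hχ => ?_⟩
  obtain ⟨ψ, hψ, Hψ⟩ := H κ (fun _ => χ) fun _ => hχ
  exact ⟨ψ, hψ, fun v i => Hψ () v i⟩

/-- **Lemma 3.** Given `h` and target arities `n'₁, …, n'ₛ`, there are arities
`n₁, …, nₛ` so that: whenever the product `T₁ × ⋯ × Tₛ` of the complete `nᵢ`-ary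
trees of height `h` is coloured so that in every copy of every `Tᵢ` no two siblings
get the same colour, there are complete `n'ᵢ`-ary subtrees `T'ᵢ ⊆ Tᵢ` of height `h`
such that in every copy of every `T'ᵢ` inside `T'₁ × ⋯ × T'ₛ`, no vertex shares a
colour with any of its ancestors. -/
theorem exists_proper_subtrees (s h : ℕ) (hh : 0 < h)
    (n' : Fin s → ℕ) (hn' : ∀ i, 0 < n' i) :
    ∃ n : Fin s → ℕ, (∀ i, 0 < n i) ∧
      ∀ (κ : Type) (χ : ((i : Fin s) → TreeVert (n i) h) → κ),
        (∀ (v : (i : Fin s) → TreeVert (n i) h) (i : Fin s)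
            (u u' : TreeVert (n i) h), Siblings u u' →
              χ (Function.update v i u) ≠ χ (Function.update v i u')) →
        ∃ ψ : (i : Fin s) → TreeVert (n' i) h → TreeVert (n i) h,
          (∀ i, IsSubtreeEmbedding (ψ i)) ∧
          ∀ (v : (i : Fin s) → TreeVert (n' i) h) (i : Fin s)
              (u u' : TreeVert (n' i) h), IsAncestor u u' →
            χ (Function.update (fun j => ψ j (v j)) i (ψ i u)) ≠
              χ (Function.update (fun j => ψ j (v j)) i (ψ i u')) :=
  exists_proper_subtrees_general s h n' hn'
end

section
/- Let m′₁,…,m′ₛ be positive integers. Then there exist positive integers m₁,…,mₛ such that the following holds. For each i let Bᵢ be a finite set of size mᵢ, and let B₁×⋯×Bₛ be coloured (with arbitrarily many colours) so that any two points that differ in exactly one coordinate receive different colours. Then there exist subsets B′ᵢ ⊆ Bᵢ with |B′ᵢ| = m′ᵢ for each i such that B′₁×⋯×B′ₛ is rainbow, i.e. all its points receive pairwise distinct colours. -/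
open Finset

section Aux

variable {s : ℕ} {α : Fin s → Type} {B : (i : Fin s) → Finset (α i)}
  {m' : Fin s → ℕ} {κ : Type} {χ : ((i : Fin s) → α i) → κ}

/-- The colour-collision count for a fixed pair of index tuples. -/
private lemma rainbow_count_aux [DecidableEq κ]
    (hχ : ∀ x y : (i : Fin s) → α i, (∀ i, x i ∈ B i) → (∀ i, y i ∈ B i) →
      (∃ i, x i ≠ y i ∧ ∀ j, j ≠ i → x j = y j) → χ x ≠ χ y)
    (N : ℕ) (hB : ∀ i, (B i).card = N)
    (u v : (i : Fin s) → Fin (m' i)) (huv : u ≠ v) :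
    (Finset.univ.filter fun f : (i : Fin s) → Fin (m' i) → {x // x ∈ B i} =>
        χ (fun i => (f i (u i)).1) = χ (fun i => (f i (v i)).1)).card * N
      ≤ Fintype.card ((i : Fin s) → Fin (m' i) → {x // x ∈ B i}) := by
  classical
  obtain ⟨i₀, hi₀⟩ := Function.ne_iff.1 huv
  set Ω := (i : Fin s) → Fin (m' i) → {x // x ∈ B i} with hΩ
  set bad : Finset Ω := Finset.univ.filter fun f : Ω =>
      χ (fun i => (f i (u i)).1) = χ (fun i => (f i (v i)).1) with hbad
  set π : Ω → Ω := fun f =>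
    Function.update f i₀ (Function.update (f i₀) (v i₀) (f i₀ (u i₀))) with hπ
  have hπ₁ : ∀ (f : Ω) (j), j ≠ i₀ → π f j = f j := by
    intro f j hj; simp only [hπ]; rw [Function.update_of_ne hj]
  have hπ₂ : ∀ (f : Ω) (t), t ≠ v i₀ → π f i₀ t = f i₀ t := by
    intro f t ht; simp only [hπ, Function.update_self]; rw [Function.update_of_ne ht]
  have hπ₃ : ∀ f : Ω, π f i₀ (v i₀) = f i₀ (u i₀) := by
    intro f; simp [hπ]
  -- `π` is injective on `bad`
  have hinj : Set.InjOn π (bad : Set Ω) := by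
    intro f hf g hg hfg
    simp only [hbad, coe_filter, Set.mem_setOf_eq, mem_coe, mem_filter] at hf hg
    have h1 : ∀ j, j ≠ i₀ → f j = g j := by
      intro j hj
      have := congrFun hfg j
      rwa [hπ₁ f j hj, hπ₁ g j hj] at this
    have h2 : ∀ t, t ≠ v i₀ → f i₀ t = g i₀ t := by
      intro t ht
      have := congrFun (congrFun hfg i₀) t
      rwa [hπ₂ f t ht, hπ₂ g t ht] at this
    have h3 : f i₀ (u i₀) = g i₀ (u i₀) := h2 _ hi₀
    have hxu : (fun i => (f i (u i)).1) = (fun i => (g i (u i)).1) := by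
      funext j
      rcases eq_or_ne j i₀ with rfl | hj
      · rw [h3]
      · rw [h1 j hj]
    by_cases hvv : f i₀ (v i₀) = g i₀ (v i₀)
    · funext j t
      rcases eq_or_ne j i₀ with rfl | hj
      · rcases eq_or_ne t (v j) with rfl | ht
        · exact hvv
        · exact h2 t ht
      · rw [h1 j hj]
    · exfalso
      have hdiff : ∃ i, (fun i => (f i (v i)).1) i ≠ (fun i => (g i (v i)).1) i ∧
          ∀ j, j ≠ i → (fun i => (f i (v i)).1) j = (fun i => (g i (v i)).1) j := by
        refine ⟨i₀, ?_, ?_⟩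
        · intro h; exact hvv (Subtype.ext h)
        · intro j hj; show (f j (v j)).1 = (g j (v j)).1; rw [h1 j hj]
      have hcol : χ (fun i => (f i (v i)).1) = χ (fun i => (g i (v i)).1) := by
        rw [← hf.2, ← hg.2, hxu]
      exact hχ _ _ (fun i => (f i (v i)).2) (fun i => (g i (v i)).2) hdiff hcol
  -- the image lands in the set of g with g i₀ (v i₀) = g i₀ (u i₀)
  set A : Finset Ω := Finset.univ.filter fun g : Ω => g i₀ (v i₀) = g i₀ (u i₀) with hA
  have himg : bad.image π ⊆ A := by
    intro g hg
    simp only [mem_image] at hg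
    obtain ⟨f, _, rfl⟩ := hg
    simp only [hA, mem_filter, mem_univ, true_and]
    rw [hπ₃, hπ₂ f (u i₀) hi₀]
  have hcard1 : bad.card ≤ A.card :=
    le_trans (le_of_eq (Finset.card_image_of_injOn hinj).symm) (Finset.card_le_card himg)
  -- N * card A ≤ card Ω via an injection
  have hcard2 : A.card * N ≤ Fintype.card Ω := by
    have hNcard : N = Fintype.card {x // x ∈ B i₀} := by rw [Fintype.card_coe, hB]
    have : Fintype.card ({g // g ∈ A} × {x // x ∈ B i₀}) ≤ Fintype.card Ω := by
      apply Fintype.card_le_of_injective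
        (fun p => Function.update p.1.1 i₀ (Function.update (p.1.1 i₀) (v i₀) p.2))
      intro ⟨⟨g, hg⟩, b⟩ ⟨⟨h, hh⟩, c⟩ heq
      simp only at heq
      have hb : b = c := by
        have := congrFun (congrFun heq i₀) (v i₀)
        simpa using this
      have hgh : g = h := by
        funext j t
        rcases eq_or_ne j i₀ with rfl | hj
        · rcases eq_or_ne t (v j) with rfl | ht
          · simp only [hA, mem_filter, mem_univ, true_and] at hg hh
            have h4 := congrFun (congrFun heq j) (u j)
            rw [Function.update_self, Function.update_self,
              Function.update_of_ne hi₀, Function.update_of_ne hi₀] at h4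
            rw [hg, hh, h4]
          · have := congrFun (congrFun heq j) t
            rwa [Function.update_self, Function.update_self,
              Function.update_of_ne ht, Function.update_of_ne ht] at this
        · have := congrFun heq j
          rw [Function.update_of_ne hj, Function.update_of_ne hj] at this
          exact congrFun this t
      simp [hb, hgh]
    rw [Fintype.card_prod, Fintype.card_coe] at this
    rw [hNcard]
    exact this
  calc bad.card * N ≤ A.card * N := Nat.mul_le_mul_right N hcard1
    _ ≤ Fintype.card Ω := hcard2

end Aux

set_option maxHeartbeats 1000000 in
/-- **Lemma 4 (rainbow boxes).** Given `m'₁, …, m'ₛ`, there are `m₁, …, mₛ` such that: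
whenever finite sets `Bᵢ` of sizes `mᵢ` are given and the product `B₁ × ⋯ × Bₛ` is
coloured (with arbitrarily many colours) so that any two points differing in exactly
one coordinate receive different colours, there are subsets `B'ᵢ ⊆ Bᵢ` of sizes `m'ᵢ`
whose product is rainbow. -/
theorem exists_rainbow_box (s : ℕ) (m' : Fin s → ℕ) (hm' : ∀ i, 0 < m' i) :
    ∃ m : Fin s → ℕ, (∀ i, 0 < m i) ∧
      ∀ (α : Fin s → Type) (B : (i : Fin s) → Finset (α i)),
        (∀ i, (B i).card = m i) →
        ∀ (κ : Type) (χ : ((i : Fin s) → α i) → κ),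
          (∀ x y : (i : Fin s) → α i, (∀ i, x i ∈ B i) → (∀ i, y i ∈ B i) →
            (∃ i, x i ≠ y i ∧ ∀ j, j ≠ i → x j = y j) → χ x ≠ χ y) →
          ∃ B' : (i : Fin s) → Finset (α i),
            (∀ i, B' i ⊆ B i ∧ (B' i).card = m' i) ∧
            (∀ x y : (i : Fin s) → α i, (∀ i, x i ∈ B' i) → (∀ i, y i ∈ B' i) →
              χ x = χ y → x = y) := by
  classical
  set K := ∏ i, m' i with hK
  have hKpos : 0 < K := Finset.prod_pos (fun i _ => hm' i)
  set N := K * K + 1 with hN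
  refine ⟨fun _ => N, fun _ => Nat.succ_pos _, ?_⟩
  intro α B hB κ χ hχ
  have hBne : ∀ i, Nonempty {x // x ∈ B i} := by
    intro i
    have : (B i).Nonempty := Finset.card_pos.mp (by rw [hB i]; exact Nat.succ_pos _)
    exact Finset.Nonempty.to_subtype this
  have hΩpos : 0 < Fintype.card ((i : Fin s) → Fin (m' i) → {x // x ∈ B i}) :=
    Fintype.card_pos
  have cardQ : Fintype.card ((i : Fin s) → Fin (m' i)) = K := by
    rw [Fintype.card_pi]; simp [hK]
  set badFor : (((i : Fin s) → Fin (m' i)) × ((i : Fin s) → Fin (m' i))) →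
      Finset ((i : Fin s) → Fin (m' i) → {x // x ∈ B i}) := fun p =>
    Finset.univ.filter fun f =>
      χ (fun i => (f i (p.1 i)).1) = χ (fun i => (f i (p.2 i)).1) with hbadFor
  set bad : Finset ((i : Fin s) → Fin (m' i) → {x // x ∈ B i}) :=
    Finset.univ.filter fun f => ∃ p : ((i : Fin s) → Fin (m' i)) × ((i : Fin s) → Fin (m' i)),
      p.1 ≠ p.2 ∧ χ (fun i => (f i (p.1 i)).1) = χ (fun i => (f i (p.2 i)).1) with hbad
  set S : Finset (((i : Fin s) → Fin (m' i)) × ((i : Fin s) → Fin (m' i))) :=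
    Finset.univ.filter fun p => p.1 ≠ p.2 with hS
  have hsub : bad ⊆ S.biUnion badFor := by
    intro f hf
    simp only [hbad, mem_filter, mem_univ, true_and] at hf
    obtain ⟨p, hp1, hp2⟩ := hf
    refine Finset.mem_biUnion.2 ⟨p, ?_, ?_⟩
    · simp [hS, hp1]
    · simp [hbadFor, hp2]
  have hone : ∀ p ∈ S, (badFor p).card * N ≤
      Fintype.card ((i : Fin s) → Fin (m' i) → {x // x ∈ B i}) := by
    intro p hp
    simp only [hS, mem_filter, mem_univ, true_and] at hp
    exact rainbow_count_aux hχ N hB p.1 p.2 hp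
  have hcount : bad.card * N ≤
      (K * K) * Fintype.card ((i : Fin s) → Fin (m' i) → {x // x ∈ B i}) := by
    have hSK : S.card ≤ K * K := by
      calc S.card ≤ (Finset.univ :
          Finset ((((i : Fin s) → Fin (m' i)) × ((i : Fin s) → Fin (m' i))))).card :=
          Finset.card_le_card (Finset.subset_univ _)
        _ = K * K := by rw [Finset.card_univ, Fintype.card_prod, cardQ]
    calc bad.card * N ≤ (S.biUnion badFor).card * N :=
          Nat.mul_le_mul_right N (Finset.card_le_card hsub)
      _ ≤ (∑ p ∈ S, (badFor p).card) * N :=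
          Nat.mul_le_mul_right N Finset.card_biUnion_le
      _ = ∑ p ∈ S, (badFor p).card * N := by rw [Finset.sum_mul]
      _ ≤ ∑ _p ∈ S, Fintype.card ((i : Fin s) → Fin (m' i) → {x // x ∈ B i}) :=
          Finset.sum_le_sum hone
      _ = S.card * Fintype.card ((i : Fin s) → Fin (m' i) → {x // x ∈ B i}) := by
          rw [Finset.sum_const, smul_eq_mul]
      _ ≤ (K * K) * Fintype.card ((i : Fin s) → Fin (m' i) → {x // x ∈ B i}) :=
          Nat.mul_le_mul_right _ hSK
  have hbadlt : bad.card < Fintype.card ((i : Fin s) → Fin (m' i) → {x // x ∈ B i}) := by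
    have h2 : (K * K) * Fintype.card ((i : Fin s) → Fin (m' i) → {x // x ∈ B i})
        < N * Fintype.card ((i : Fin s) → Fin (m' i) → {x // x ∈ B i}) :=
      (Nat.mul_lt_mul_right hΩpos).2 (Nat.lt_succ_self _)
    have := lt_of_le_of_lt hcount h2
    rw [Nat.mul_comm N _] at this
    exact Nat.lt_of_mul_lt_mul_right this
  -- pick a good tuple of functions
  have hex : ((Finset.univ : Finset ((i : Fin s) → Fin (m' i) → {x // x ∈ B i})) \ bad).Nonempty := by
    rw [← Finset.card_pos, Finset.card_sdiff_of_subset (Finset.subset_univ _), Finset.card_univ]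
    omega
  obtain ⟨f, hf⟩ := hex
  have hfgood : ∀ u v : (i : Fin s) → Fin (m' i), u ≠ v →
      χ (fun i => (f i (u i)).1) ≠ χ (fun i => (f i (v i)).1) := by
    rw [Finset.mem_sdiff] at hf
    intro u v huv hc
    exact hf.2 (by simp only [hbad, mem_filter, mem_univ, true_and]; exact ⟨⟨u, v⟩, huv, hc⟩)
  -- injectivity of each f i
  have hfinj : ∀ i, Function.Injective fun t : Fin (m' i) => (f i t).1 := by
    intro i t t' htt'
    by_contra hne
    refine hfgood (Function.update (fun j => ⟨0, hm' j⟩) i t)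
      (Function.update (fun j => ⟨0, hm' j⟩) i t') ?_ ?_
    · intro h
      apply hne
      have := congrFun h i
      rwa [Function.update_self, Function.update_self] at this
    · congr 1
      funext j
      rcases eq_or_ne j i with rfl | hj
      · rw [Function.update_self, Function.update_self]; exact htt'
      · rw [Function.update_of_ne hj, Function.update_of_ne hj]
  refine ⟨fun i => Finset.image (fun t => (f i t).1) Finset.univ, fun i => ⟨?_, ?_⟩, ?_⟩
  · intro a ha
    obtain ⟨t, _, rfl⟩ := Finset.mem_image.1 ha
    exact (f i t).2
  · rw [Finset.card_image_of_injective _ (hfinj i), Finset.card_univ, Fintype.card_fin]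
  · intro x y hx hy hxy
    have hux : ∀ i, ∃ t, (f i t).1 = x i := by
      intro i
      obtain ⟨t, _, ht⟩ := Finset.mem_image.1 (hx i)
      exact ⟨t, ht⟩
    have huy : ∀ i, ∃ t, (f i t).1 = y i := by
      intro i
      obtain ⟨t, _, ht⟩ := Finset.mem_image.1 (hy i)
      exact ⟨t, ht⟩
    choose ux hux using hux
    choose uy huy using huy
    have hx' : (fun i => (f i (ux i)).1) = x := funext hux
    have hy' : (fun i => (f i (uy i)).1) = y := funext huy
    by_cases h : ux = uy
    · rw [← hx', ← hy', h]
    · exact absurd (by rw [hx', hy']; exact hxy) (hfgood ux uy h)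
end

section
/- Let T be a finite rooted tree and let a, b be reals with 0 < a ≤ b. Then there exist a positive integer n and an injective map φ from the vertex set of T into ℝⁿ such that: (i) whenever u ≠ v are siblings in T (distinct vertices with the same parent), the distance from φ(u) to φ(v) equals a; (ii) whenever u is a proper ancestor of v in T, the distance from φ(u) to φ(v) equals b; and (iii) the image φ(V(T)) is an affinely independent set of points. -/
/-!
Put the root at its own "colour" and colour every other vertex by its parent. Send `v` to
`(a/√2) e_v + γ f_{colour v}` in `ℝ^(V ⊕ colours)`, where `γ² = (b² - a²)/2`. Two distinct
vertices of the same colour are at distance `√(2 (a/√2)²) = a`, two of different colours at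
distance `√(a² + 2γ²) = b`, and the `e_v`-components make the image linearly, hence affinely,
independent. A proper ancestor never has the colour of its descendant: otherwise the parent of
the descendant would be a periodic point of `parent` above the root, i.e. the root itself.
-/

open Function

theorem Function.IsPeriodicPt.eq_of_iterate_eq_of_isFixedPt {α : Type*} {f : α → α} {n m : ℕ}
    {x y : α} (hx : IsPeriodicPt f n x) (hn : 0 < n) (hy : IsFixedPt f y) (hxy : f^[m] x = y) :
    x = y := by
  have hmn : m * n = (m * n - m) + m := (Nat.sub_add_cancel (Nat.le_mul_of_pos_right m hn)).symm
  rw [← (hx.const_mul m).eq, hmn, iterate_add_apply, hxy, (hy.iterate _).eq]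

theorem parent_ne_parent_of_iterate_eq {V : Type*} {root : V} {parent : V → V}
    (hroot : parent root = root) (hreach : ∀ v, ∃ k, parent^[k] v = root) {u v : V} {k : ℕ}
    (hk : parent^[k] v = u) (huv : u ≠ v) (hu : u ≠ root) : parent u ≠ parent v := by
  intro hpar
  obtain _ | k := k
  · exact huv hk.symm
  have hk' : parent^[k] (parent v) = u := by rwa [← iterate_succ_apply]
  have hperiodic : IsPeriodicPt parent (k + 1) (parent v) := by
    rw [IsPeriodicPt, IsFixedPt, iterate_succ_apply', hk', hpar]
  obtain ⟨N, hN⟩ := hreach (parent v)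
  have hv_root : parent v = root :=
    hperiodic.eq_of_iterate_eq_of_isFixedPt k.succ_pos hroot hN
  exact hu (by rw [← hk', hv_root, iterate_fixed hroot])

theorem sum_sq_sub_single {ι R : Type*} [Fintype ι] [DecidableEq ι] [CommRing R] (i j : ι)
    (t : R) : ∑ w, ((Pi.single i t : ι → R) w - (Pi.single j t : ι → R) w) ^ 2 =
      if i = j then 0 else 2 * t ^ 2 := by
  split_ifs with hij
  · simp [hij]
  · rw [Fintype.sum_eq_add i j hij fun w hw => by simp [hw.1, hw.2]]
    simp [hij, Ne.symm hij]
    ring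

section TwoDistanceSimplex

variable {V C : Type*} [DecidableEq V] [DecidableEq C]

noncomputable def twoDistanceSimplex (c : V → C) (a b : ℝ) (v : V) : EuclideanSpace ℝ (V ⊕ C) :=
  WithLp.toLp 2 (Sum.elim (Pi.single v (a / √2)) (Pi.single (c v) √((b ^ 2 - a ^ 2) / 2)))

theorem dist_twoDistanceSimplex [Fintype V] [Fintype C] (c : V → C) {a b : ℝ} (ha : 0 ≤ a)
    (hab : a ≤ b) {u v : V} (huv : u ≠ v) :
    dist (twoDistanceSimplex c a b u) (twoDistanceSimplex c a b v) =
      if c u = c v then a else b := by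
  have hα : (a / √2) ^ 2 = a ^ 2 / 2 := by rw [div_pow, Real.sq_sqrt zero_le_two]
  have hγ : √((b ^ 2 - a ^ 2) / 2) ^ 2 = (b ^ 2 - a ^ 2) / 2 := Real.sq_sqrt (by nlinarith)
  simp only [EuclideanSpace.dist_eq, twoDistanceSimplex, Real.dist_eq, sq_abs,
    Fintype.sum_sum_type, Sum.elim_inl, Sum.elim_inr, sum_sq_sub_single, if_neg huv]
  split_ifs
  · rw [hα, add_zero, mul_div_cancel₀ _ two_ne_zero, Real.sqrt_sq ha]
  · convert Real.sqrt_sq (ha.trans hab) using 2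
    rw [hα, hγ]
    ring

theorem linearIndependent_twoDistanceSimplex (c : V → C) {a : ℝ} (ha : a ≠ 0) (b : ℝ) :
    LinearIndependent ℝ (twoDistanceSimplex c a b) := by
  let firstBlock : EuclideanSpace ℝ (V ⊕ C) →ₗ[ℝ] V → ℝ :=
    LinearMap.funLeft ℝ ℝ Sum.inl ∘ₗ (WithLp.linearEquiv 2 ℝ _).toLinearMap
  refine .of_comp firstBlock ?_
  have hα : a / √2 ≠ 0 := by positivity
  convert (Pi.linearIndependent_single_one V ℝ).units_smul fun _ => Units.mk0 _ hα using 1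
  ext v w
  simp [firstBlock, twoDistanceSimplex, LinearMap.funLeft, Pi.single_apply]

theorem exists_fin_twoDistanceSimplex [Fintype V] [Nonempty V] [Fintype C] (c : V → C) {a b : ℝ}
    (ha : 0 < a) (hab : a ≤ b) :
    ∃ n : ℕ, 0 < n ∧ ∃ φ : V → EuclideanSpace ℝ (Fin n),
      (∀ u v, u ≠ v → dist (φ u) (φ v) = if c u = c v then a else b) ∧
      LinearIndependent ℝ φ := by
  let e := LinearIsometryEquiv.piLpCongrLeft 2 ℝ ℝ (Fintype.equivFin (V ⊕ C))
  refine ⟨_, Fintype.card_pos, e ∘ twoDistanceSimplex c a b, fun u v huv => ?_,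
    (linearIndependent_twoDistanceSimplex c ha.ne' b).map' e.toLinearMap e.ker⟩
  rw [comp_apply, comp_apply, e.dist_map, dist_twoDistanceSimplex c ha.le hab huv]

end TwoDistanceSimplex

/-- **Construction `D(T,a,b)`.** Let `T` be a finite rooted tree (given by a finite
vertex type `V`, a root, and a parent map under which every vertex reaches the root)
and let `0 < a ≤ b`. Then there is an injective map `φ : V → ℝⁿ` such that siblings
are mapped to points at distance `a`, every vertex is at distance `b` from each of
its proper ancestors, and the image is affinely independent (a simplex). -/
theorem exists_tree_simplex (V : Type) [Fintype V] (root : V) (parent : V → V)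
    (hroot : parent root = root)
    (hreach : ∀ v : V, ∃ k : ℕ, parent^[k] v = root)
    (a b : ℝ) (ha : 0 < a) (hab : a ≤ b) :
    ∃ n : ℕ, 0 < n ∧ ∃ φ : V → EuclideanSpace ℝ (Fin n),
      Function.Injective φ ∧
      (∀ u v : V, u ≠ v → u ≠ root → v ≠ root → parent u = parent v →
        dist (φ u) (φ v) = a) ∧
      (∀ u v : V, u ≠ v → (∃ k : ℕ, parent^[k] v = u) → dist (φ u) (φ v) = b) ∧
      AffineIndependent ℝ φ := by
  classical
  have : Nonempty V := ⟨root⟩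
  let colour : V → Option V := fun v => if v = root then none else some (parent v)
  obtain ⟨n, hn, φ, hdist, hφ⟩ := exists_fin_twoDistanceSimplex colour ha hab
  refine ⟨n, hn, φ, hφ.injective, fun u v huv hu hv hpar => ?_, fun u v huv ⟨k, hk⟩ => ?_,
    hφ.affineIndependent⟩
  · rw [hdist u v huv, if_pos (by simp [colour, hu, hv, hpar])]
  · have hv : v ≠ root := by
      rintro rfl
      exact huv (by rw [← hk, iterate_fixed hroot])
    rw [hdist u v huv, if_neg]
    by_cases hu : u = root
    · simp [colour, hu, hv]
    · simpa [colour, hu, hv] using parent_ne_parent_of_iterate_eq hroot hreach hk huv hu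
end

section
/- Let b₁,…,bₛ be positive reals and set b_min = min{b₁,…,bₛ}. For each i let tᵢ = ⌈bᵢ²/b_min²⌉ and aᵢ = bᵢ/√tᵢ. Then aᵢ ≤ b_min for every i, and, writing t = t₁+⋯+tₛ, the cuboid R′ ⊆ ℝᵗ whose side lengths are aᵢ repeated tᵢ times for each i (i.e. R′ = {0,a′₁}×⋯×{0,a′ₜ} where the list a′₁,…,a′ₜ consists of a₁ repeated t₁ times, then a₂ repeated t₂ times, etc.) contains a subset congruent to the cuboid R = {0,b₁}×⋯×{0,bₛ} ⊆ ℝˢ. -/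
/-!
Split the `i`-th coordinate of `ℝˢ` into `tᵢ` coordinates of `ℝᵗ`, each carrying `xᵢ / √tᵢ`.
Since `tᵢ · (xᵢ / √tᵢ)² = xᵢ²` this is an isometry, and it sends `{0, bᵢ}` into `{0, aᵢ}` in
every one of the `tᵢ` new coordinates. The bound `aᵢ ≤ b_min` is `bᵢ² ≤ tᵢ b_min²`, which is what
the ceiling guarantees.
-/

open Finset

theorem isometry_toLp_div_sqrt_card_fiber {ι κ : Type*} [Fintype ι] [Fintype κ] [DecidableEq ι]
    {g : κ → ι} (hg : Function.Surjective g) :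
    Isometry fun x : EuclideanSpace ℝ ι =>
      WithLp.toLp 2 fun k => x (g k) / √(#{k' | g k' = g k} : ℝ) := by
  have hfiber : ∀ i, (0 : ℝ) < #{k | g k = i} := fun i => by
    obtain ⟨k, rfl⟩ := hg i
    exact_mod_cast card_pos.2 ⟨k, by simp⟩
  refine Isometry.of_dist_eq fun x y => ?_
  simp only [EuclideanSpace.dist_eq, Real.dist_eq, sq_abs]
  congr 1
  calc ∑ k, (x (g k) / √(#{k' | g k' = g k} : ℝ) - y (g k) / √(#{k' | g k' = g k} : ℝ)) ^ 2
      = ∑ k, (x (g k) - y (g k)) ^ 2 / #{k' | g k' = g k} := by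
        simp only [← sub_div, div_pow, Real.sq_sqrt (hfiber _).le]
    _ = ∑ i, ∑ k with g k = i, (x i - y i) ^ 2 / #{k' | g k' = i} :=
        (sum_fiberwise' _ g fun i => (x i - y i) ^ 2 / #{k' | g k' = i}).symm
    _ = ∑ i, (x i - y i) ^ 2 := by
        refine sum_congr rfl fun i _ => ?_
        rw [sum_const, nsmul_eq_mul, mul_div_cancel₀ _ (hfiber i).ne']

theorem List.card_filter_getElem_eq_count {α : Type*} [DecidableEq α] (L : List α) (a : α) :
    #{k : Fin L.length | L[k] = a} = L.count a := by
  simp only [card_filter, Fin.getElem_fin]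
  rw [Fin.sum_univ_fun_getElem L fun x => if x = a then 1 else 0]
  induction L with
  | nil => rfl
  | cons x L ih => simp [List.count_cons, ih, add_comm]

theorem List.count_flatten_ofFn_replicate {s : ℕ} (t : Fin s → ℕ) (i : Fin s) :
    (List.ofFn fun j => List.replicate (t j) j).flatten.count i = t i := by
  simp [List.count_flatten, Function.comp_def, List.count_replicate, List.sum_ofFn]

theorem div_sqrt_ceil_sq_div_sq_le (b : ℝ) {m : ℝ} (hm : 0 < m) : b / √⌈b ^ 2 / m ^ 2⌉₊ ≤ m := by
  rcases eq_or_ne ⌈b ^ 2 / m ^ 2⌉₊ 0 with h | h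
  · simp [h, hm.le]
  rw [div_le_iff₀ (by positivity)]
  calc b ≤ |b| := le_abs_self b
    _ ≤ √(m ^ 2 * ⌈b ^ 2 / m ^ 2⌉₊) := Real.abs_le_sqrt <| by
        rw [← div_le_iff₀' (by positivity)]; exact Nat.le_ceil _
    _ = m * √⌈b ^ 2 / m ^ 2⌉₊ := by rw [Real.sqrt_mul (by positivity), Real.sqrt_sq hm.le]

theorem mapsTo_cuboid_comp_div {n s : ℕ} (g : Fin n → Fin s) (b c : Fin s → ℝ) :
    Set.MapsTo (fun x : EuclideanSpace ℝ (Fin s) => WithLp.toLp 2 fun k => x (g k) / c (g k))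
      (cuboid b) (cuboid fun k => b (g k) / c (g k)) := fun x hx k => by
  rcases hx (g k) with h | h <;> simp [h]

theorem exists_subset_cuboid_map_isCopy {s : ℕ} (b c : Fin s → ℝ) (L : List (Fin s))
    (hL : ∀ i, i ∈ L) (hc : ∀ i, c i = b i / √(L.count i)) :
    ∃ X : Set (EuclideanSpace ℝ (Fin (L.map c).length)),
      X ⊆ cuboid (L.map c).get ∧ IsCopy (cuboid b) X := by
  have e : (L.map c).length = L.length := L.length_map c
  set g : Fin (L.map c).length → Fin s := fun k => L[k.cast e]
  have hfiber : ∀ i, #{k | g k = i} = L.count i := fun i => by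
    rw [← L.card_filter_getElem_eq_count]
    exact card_equiv (finCongr e) (by simp [g])
  have hg : Function.Surjective g := fun i => by
    obtain ⟨k, hk, rfl⟩ := List.mem_iff_getElem.1 (hL i)
    exact ⟨⟨k, e ▸ hk⟩, rfl⟩
  have hside : (L.map c).get = fun k => b (g k) / √(#{k' | g k' = g k} : ℝ) := by
    ext k
    rw [hfiber]
    simp [g, hc]
  rw [hside]
  exact ⟨_, (mapsTo_cuboid_comp_div g b fun i => √(#{k | g k = i} : ℝ)).image_subset, _,
    isometry_toLp_div_sqrt_card_fiber hg, rfl⟩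

theorem cuboid_subset_of_refined_cuboid_general (s : ℕ)
    (b : Fin s → ℝ) (hb : ∀ i, 0 < b i)
    (bmin : ℝ) (hmin : IsLeast (Set.range b) bmin)
    (t : Fin s → ℕ) (ht : ∀ i, t i = ⌈(b i) ^ 2 / bmin ^ 2⌉₊)
    (a : Fin s → ℝ) (ha : ∀ i, a i = b i / Real.sqrt (t i)) :
    (∀ i, a i ≤ bmin) ∧
    ∀ l : List ℝ, l = (List.ofFn fun i => List.replicate (t i) (a i)).flatten →
      ∃ X : Set (EuclideanSpace ℝ (Fin l.length)),
        X ⊆ cuboid l.get ∧ IsCopy (cuboid b) X := by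
  obtain ⟨⟨i₀, rfl⟩, -⟩ := hmin
  refine ⟨fun i => ha i ▸ ht i ▸ div_sqrt_ceil_sq_div_sq_le (b i) (hb i₀), ?_⟩
  rintro l rfl
  set L := (List.ofFn fun i => List.replicate (t i) i).flatten
  have hcount : ∀ i, L.count i = t i := List.count_flatten_ofFn_replicate t
  have hmem : ∀ i, i ∈ L := fun i => by
    rw [← List.count_pos_iff, hcount, ht, Nat.ceil_pos]
    exact div_pos (pow_pos (hb i) 2) (pow_pos (hb i₀) 2)
  have hL : (List.ofFn fun i => List.replicate (t i) (a i)).flatten = L.map a := by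
    simp [L, List.map_flatten, List.map_ofFn, Function.comp_def]
  rw [hL]
  exact exists_subset_cuboid_map_isCopy b a L hmem fun i => by rw [ha, hcount]

/-- **The cuboid `R'` contains `R`.** Let `b₁, …, bₛ > 0`, `b_min = min{b₁,…,bₛ}`,
`tᵢ = ⌈bᵢ²/b_min²⌉` and `aᵢ = bᵢ/√tᵢ`. Then each `aᵢ ≤ b_min`, and the cuboid `R'`
whose list of side lengths consists of `a₁` repeated `t₁` times, then `a₂` repeated
`t₂` times, etc. (living in `ℝᵗ` with `t = t₁ + ⋯ + tₛ`) contains a subset congruent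
to `R = {0,b₁} × ⋯ × {0,bₛ}`. -/
theorem cuboid_subset_of_refined_cuboid (s : ℕ) (hs : 0 < s)
    (b : Fin s → ℝ) (hb : ∀ i, 0 < b i)
    (bmin : ℝ) (hmin : IsLeast (Set.range b) bmin)
    (t : Fin s → ℕ) (ht : ∀ i, t i = ⌈(b i) ^ 2 / bmin ^ 2⌉₊)
    (a : Fin s → ℝ) (ha : ∀ i, a i = b i / Real.sqrt (t i)) :
    (∀ i, a i ≤ bmin) ∧
    ∀ l : List ℝ, l = (List.ofFn fun i => List.replicate (t i) (a i)).flatten →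
      ∃ X : Set (EuclideanSpace ℝ (Fin l.length)),
        X ⊆ cuboid l.get ∧ IsCopy (cuboid b) X :=
  cuboid_subset_of_refined_cuboid_general s b hb bmin hmin t ht a ha
end

section
/- Let S be a configuration, and suppose that for every positive integer m there exists a canonically Ramsey configuration S′ with more than m points such that S′ contains a copy of S. Then S is Ramsey: for every positive integer r there exists n such that every colouring of ℝⁿ with at most r colours admits a monochromatic copy of S. -/
/-! A rainbow copy of a configuration with more than `r` points cannot exist in an
`r`-colouring, so for few colours a canonically Ramsey configuration `S'` is forced to
have monochromatic copies; these contain monochromatic copies of every `S` that embeds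
isometrically into `S'`. -/

theorem Monochromatic.mono {α κ : Type*} {χ : α → κ} {X Y : Set α} (hY : Monochromatic χ Y)
    (hXY : X ⊆ Y) : Monochromatic χ X :=
  fun x hx y hy => hY x (hXY hx) y (hXY hy)

theorem RainbowSet.ncard_le {α κ : Type*} [Finite κ] {χ : α → κ} {X : Set α}
    (hX : RainbowSet χ X) : X.ncard ≤ Nat.card κ :=
  hX.ncard_image.symm.trans_le (Set.ncard_le_card _)

theorem IsCopy.ncard_eq {s n : ℕ} {C : Set (EuclideanSpace ℝ (Fin s))}
    {X : Set (EuclideanSpace ℝ (Fin n))} (hX : IsCopy C X) : X.ncard = C.ncard := by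
  obtain ⟨f, hf, rfl⟩ := hX
  exact Set.ncard_image_of_injective C hf.injective

theorem IsCopy.exists_copy_subset {s s' n : ℕ} {S : Set (EuclideanSpace ℝ (Fin s))}
    {S' : Set (EuclideanSpace ℝ (Fin s'))} {Y : Set (EuclideanSpace ℝ (Fin n))}
    (hY : IsCopy S' Y) {X : Set (EuclideanSpace ℝ (Fin s'))} (hXS' : X ⊆ S')
    (hX : IsCopy S X) : ∃ Z ⊆ Y, IsCopy S Z := by
  obtain ⟨f, hf, rfl⟩ := hY
  obtain ⟨g, hg, rfl⟩ := hX
  exact ⟨f '' (g '' S), Set.image_mono hXS', f ∘ g, hf.comp hg, (Set.image_comp f g S).symm⟩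

theorem CanonicallyRamsey.exists_monochromatic_copy {s : ℕ} {C : Set (EuclideanSpace ℝ (Fin s))}
    (hC : CanonicallyRamsey C) {r : ℕ} (hr : r < C.ncard) :
    ∃ n : ℕ, ∀ χ : EuclideanSpace ℝ (Fin n) → Fin r,
      ∃ X : Set (EuclideanSpace ℝ (Fin n)), IsCopy C X ∧ Monochromatic χ X := by
  obtain ⟨n, -, hn⟩ := hC
  refine ⟨n, fun χ => ?_⟩
  obtain ⟨X, hX, hmono | hrainbow⟩ := hn (Fin r) χ
  · exact ⟨X, hX, hmono⟩
  · have hle : C.ncard ≤ r := by simpa only [hX.ncard_eq, Nat.card_fin] using hrainbow.ncard_le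
    omega

theorem isRamsey_of_subset_large_canonicallyRamsey_general (s : ℕ)
    (S : Set (EuclideanSpace ℝ (Fin s)))
    (h : ∀ m : ℕ, ∃ (s' : ℕ) (S' : Set (EuclideanSpace ℝ (Fin s'))),
      S'.Finite ∧ m < S'.ncard ∧ CanonicallyRamsey S' ∧ ∃ X ⊆ S', IsCopy S X) :
    IsRamsey S := by
  intro r _
  obtain ⟨s', S', -, hcard, hS', X, hXS', hX⟩ := h r
  obtain ⟨n, hn⟩ := hS'.exists_monochromatic_copy hcard
  refine ⟨n, fun χ => ?_⟩
  obtain ⟨Y, hY, hmono⟩ := hn χ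
  obtain ⟨Z, hZY, hZ⟩ := hY.exists_copy_subset hXS' hX
  exact ⟨Z, hZ, hmono.mono hZY⟩

/-- If a configuration `S` is contained in a copy inside arbitrarily large canonically
Ramsey configurations, then `S` is Ramsey. -/
theorem isRamsey_of_subset_large_canonicallyRamsey (s : ℕ)
    (S : Set (EuclideanSpace ℝ (Fin s))) (hS : S.Finite)
    (h : ∀ m : ℕ, ∃ (s' : ℕ) (S' : Set (EuclideanSpace ℝ (Fin s'))),
      S'.Finite ∧ m < S'.ncard ∧ CanonicallyRamsey S' ∧ ∃ X ⊆ S', IsCopy S X) :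
    IsRamsey S :=
  isRamsey_of_subset_large_canonicallyRamsey_general s S h
end
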